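/- arXiv:1802.07229 — 2 statements merged into one kernel-verified Lean document; each statement's English description precedes it below -/
import Mathlib

section
/- Let D be a nonempty finite set of probability mass functions on a countable set X, μ_D the uniform mixture of D, L : [0,1] → [0,M] a convex, monotone decreasing loss function, and p a probability distribution on X. For each q ∈ D define q'(x) = q(x)·𝟙[q(x)·ε₁ ≤ 3·μ_D(x)·M] (mass outside this event moved to a fixed point x*, where we assume p(x*) = 0). Let μ'_D be the uniform mixture of the q'. Then E_{x∼p}[L(μ'_D(x))] ≤ max_{q ∈ D} E_{x∼p}[L(q(x))] + ε₁/3. -/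
/-!
Pointwise in `x`, Jensen's inequality bounds the loss of the truncated mixture by the average of
the losses of the truncated `q'(x)`. Truncating `q(x)` to `0` costs at most `M`, since
`L(0) ≤ M ≤ L(q(x)) + M`, and by Markov's inequality for the average `μ_D(x)` the truncated `q`
make up at most a fraction `ε₁ / (3M)` of `D`, so truncation costs at most `ε₁ / 3` in total.
Averaging over `p` and bounding the average over `D` by the maximum gives the theorem.
-/

open scoped Classical BigOperators

open Finset

section Averages

variable {ι : Type*}

theorem average_le_sup' (s : Finset ι) (hs : s.Nonempty) (f : ι → ℝ) :
    (1 / #s : ℝ) * ∑ i ∈ s, f i ≤ s.sup' hs f := by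
  have hcard : (0 : ℝ) < #s := by exact_mod_cast hs.card_pos
  rw [one_div_mul_eq_div, div_le_iff₀ hcard, mul_comm, ← nsmul_eq_mul]
  exact sum_le_card_nsmul s f _ fun i hi => le_sup' f hi

theorem sum_const_one_div_card (s : Finset ι) (hs : s.Nonempty) :
    ∑ _i ∈ s, (1 / #s : ℝ) = 1 := by
  have hcard : (#s : ℝ) ≠ 0 := by exact_mod_cast hs.card_pos.ne'
  rw [sum_const, nsmul_eq_mul, mul_one_div_cancel hcard]

theorem Convex.uniform_average_mem {S : Set ℝ} (hS : Convex ℝ S) (s : Finset ι) (hs : s.Nonempty)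
    {w : ι → ℝ} (hw : ∀ i ∈ s, w i ∈ S) : (1 / #s : ℝ) * ∑ i ∈ s, w i ∈ S := by
  simpa only [smul_eq_mul, ← mul_sum] using
    hS.sum_mem (fun _ _ => by positivity) (sum_const_one_div_card s hs) hw

theorem ConvexOn.map_uniform_average_le {S : Set ℝ} {L : ℝ → ℝ} (hL : ConvexOn ℝ S L)
    (s : Finset ι) (hs : s.Nonempty) {w : ι → ℝ} (hw : ∀ i ∈ s, w i ∈ S) :
    L ((1 / #s : ℝ) * ∑ i ∈ s, w i) ≤ (1 / #s : ℝ) * ∑ i ∈ s, L (w i) := by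
  simpa only [smul_eq_mul, ← mul_sum] using
    hL.map_sum_le (fun _ _ => by positivity) (sum_const_one_div_card s hs) hw

/-- Markov's inequality for `μ = c * ∑ j ∈ s, a j`: an index with `k * μ * M < a i * ε`
has `M ≤ ε / (k * μ) * a i`. -/
theorem mul_sum_ite_le_div {s : Finset ι} {a : ι → ℝ} (ha : ∀ i ∈ s, 0 ≤ a i)
    {c ε k : ℝ} (hc : 0 ≤ c) (hε : 0 ≤ ε) (hk : 0 < k) (M : ℝ) :
    c * ∑ i ∈ s, (if a i * ε ≤ k * (c * ∑ j ∈ s, a j) * M then 0 else M) ≤ ε / k := by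
  rcases hc.eq_or_lt with rfl | hc
  · simp only [zero_mul]; positivity
  by_cases hsum : ∑ j ∈ s, a j = 0
  · have ha0 : ∀ i ∈ s, a i = 0 := (sum_eq_zero_iff_of_nonneg ha).1 hsum
    rw [sum_eq_zero fun i hi => by simp [ha0 i hi, hsum], mul_zero]
    positivity
  set μ := c * ∑ j ∈ s, a j
  have hμ : 0 < μ := mul_pos hc ((sum_nonneg ha).lt_of_ne' hsum)
  have hterm : ∀ i ∈ s, (if a i * ε ≤ k * μ * M then 0 else M) ≤ ε / (k * μ) * a i := by
    intro i hi
    split_ifs with h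
    · exact mul_nonneg (by positivity) (ha i hi)
    · rw [div_mul_eq_mul_div, le_div_iff₀ (by positivity)]
      linarith
  calc c * ∑ i ∈ s, (if a i * ε ≤ k * μ * M then 0 else M)
      ≤ c * ∑ i ∈ s, ε / (k * μ) * a i := by gcongr with i hi; exact hterm i hi
    _ = ε / (k * μ) * μ := by rw [← mul_sum]; ring
    _ = ε / k := by field_simp

end Averages

theorem ConvexOn.map_average_truncated_le {ι : Type*} {L : ℝ → ℝ} {M ε k : ℝ}
    (hconv : ConvexOn ℝ (Set.Icc 0 1) L) (hL : ∀ t ∈ Set.Icc (0 : ℝ) 1, L t ∈ Set.Icc 0 M)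
    (hε : 0 ≤ ε) (hk : 0 < k) (s : Finset ι) (hs : s.Nonempty) {v : ι → ℝ}
    (hv : ∀ i ∈ s, v i ∈ Set.Icc 0 1) :
    L ((1 / #s : ℝ) * ∑ i ∈ s,
        (if v i * ε ≤ k * ((1 / #s : ℝ) * ∑ j ∈ s, v j) * M then v i else 0))
      ≤ (1 / #s : ℝ) * ∑ i ∈ s, L (v i) + ε / k := by
  set c : ℝ := 1 / #s
  set P : ι → Prop := fun i => v i * ε ≤ k * (c * ∑ j ∈ s, v j) * M
  have htrunc : ∀ i ∈ s, L (if P i then v i else 0) ≤ L (v i) + if P i then 0 else M := by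
    intro i hi
    split_ifs
    · simp
    · linarith [(hL 0 ⟨le_rfl, zero_le_one⟩).2, (hL (v i) (hv i hi)).1]
  have hmarkov : c * ∑ i ∈ s, (if P i then 0 else M) ≤ ε / k :=
    mul_sum_ite_le_div (fun i hi => (hv i hi).1) (by positivity) hε hk M
  calc L (c * ∑ i ∈ s, if P i then v i else 0)
      ≤ c * ∑ i ∈ s, L (if P i then v i else 0) :=
        hconv.map_uniform_average_le s hs fun i hi => by
          split_ifs
          exacts [hv i hi, ⟨le_rfl, zero_le_one⟩]
    _ ≤ c * ∑ i ∈ s, (L (v i) + if P i then 0 else M) := by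
        gcongr with i hi; exact htrunc i hi
    _ = c * ∑ i ∈ s, L (v i) + c * ∑ i ∈ s, (if P i then 0 else M) := by
        rw [sum_add_distrib, mul_add]
    _ ≤ c * ∑ i ∈ s, L (v i) + ε / k := by linarith

section Series

variable {α : Type*} {f : α → ℝ}

theorem summable_of_tsum_eq_one (hf : ∑' x, f x = 1) : Summable f := by
  by_contra h
  rw [tsum_eq_zero_of_not_summable h] at hf
  exact zero_ne_one hf

theorem le_one_of_tsum_eq_one (hf0 : ∀ x, 0 ≤ f x) (hf1 : ∑' x, f x = 1) (a : α) : f a ≤ 1 :=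
  hf1 ▸ (summable_of_tsum_eq_one hf1).le_tsum a fun x _ => hf0 x

theorem Summable.mul_of_mem_Icc {p : α → ℝ} (hp : Summable p) (hp0 : ∀ x, 0 ≤ p x) {M : ℝ}
    (hf : ∀ x, f x ∈ Set.Icc 0 M) : Summable fun x => p x * f x :=
  (hp.mul_right M).of_nonneg_of_le (fun x => mul_nonneg (hp0 x) (hf x).1)
    fun x => mul_le_mul_of_nonneg_left (hf x).2 (hp0 x)

end Series

theorem stmt6_general {X : Type*} (M ε₁ : ℝ) (hε : 0 < ε₁)
    (L : ℝ → ℝ) (hconv : ConvexOn ℝ (Set.Icc 0 1) L)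
    (hL : ∀ t ∈ Set.Icc (0:ℝ) 1, L t ∈ Set.Icc 0 M)
    (p : X → ℝ) (hp0 : ∀ x, 0 ≤ p x) (hp1 : ∑' x, p x = 1)
    (D : Finset (X → ℝ)) (hD : D.Nonempty)
    (hq0 : ∀ q ∈ D, ∀ x, 0 ≤ q x) (hq1 : ∀ q ∈ D, ∑' x, q x = 1) :
    ∑' x, p x * L ((1 / D.card : ℝ) * ∑ q ∈ D,
        (if q x * ε₁ ≤ 3 * ((1 / D.card : ℝ) * ∑ r ∈ D, r x) * M then q x else 0))
      ≤ D.sup' hD (fun q => ∑' x, p x * L (q x)) + ε₁ / 3 := by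
  set c : ℝ := 1 / #D
  have hp := summable_of_tsum_eq_one hp1
  have hq : ∀ q ∈ D, ∀ x, q x ∈ Set.Icc (0 : ℝ) 1 := fun q hq x =>
    ⟨hq0 q hq x, le_one_of_tsum_eq_one (hq0 q hq) (hq1 q hq) x⟩
  have hsummand : ∀ q ∈ D, Summable fun x => p x * L (q x) := fun q hq' =>
    hp.mul_of_mem_Icc hp0 fun x => hL _ (hq q hq' x)
  have hmix : ∀ x, c * ∑ q ∈ D,
      (if q x * ε₁ ≤ 3 * (c * ∑ r ∈ D, r x) * M then q x else 0) ∈ Set.Icc (0 : ℝ) 1 :=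
    fun x => (convex_Icc 0 1).uniform_average_mem D hD fun q hq' => by
      split_ifs
      exacts [hq q hq' x, ⟨le_rfl, zero_le_one⟩]
  calc _ ≤ ∑' x, (c * ∑ q ∈ D, p x * L (q x) + ε₁ / 3 * p x) := by
        refine Summable.tsum_le_tsum (fun x => ?_) (hp.mul_of_mem_Icc hp0 fun x => hL _ (hmix x))
          (((summable_sum hsummand).mul_left c).add (hp.mul_left _))
        calc _ ≤ p x * (c * ∑ q ∈ D, L (q x) + ε₁ / 3) := mul_le_mul_of_nonneg_left
              (hconv.map_average_truncated_le hL hε.le three_pos D hD fun q hq' => hq q hq' x)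
              (hp0 x)
          _ = _ := by rw [← mul_sum]; ring
    _ = c * ∑ q ∈ D, ∑' x, p x * L (q x) + ε₁ / 3 := by
        rw [((summable_sum hsummand).mul_left c).tsum_add (hp.mul_left _), tsum_mul_left,
          Summable.tsum_finsetSum hsummand, tsum_mul_left, hp1, mul_one]
    _ ≤ D.sup' hD (fun q => ∑' x, p x * L (q x)) + ε₁ / 3 := by
        gcongr; exact average_le_sup' D hD _

theorem stmt6 {X : Type*} [Countable X] (M ε₁ : ℝ) (hM : 0 < M) (hε : 0 < ε₁)
    (L : ℝ → ℝ) (hconv : ConvexOn ℝ (Set.Icc 0 1) L)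
    (hanti : AntitoneOn L (Set.Icc 0 1))
    (hL : ∀ t ∈ Set.Icc (0:ℝ) 1, L t ∈ Set.Icc 0 M)
    (p : X → ℝ) (hp0 : ∀ x, 0 ≤ p x) (hp1 : ∑' x, p x = 1)
    (D : Finset (X → ℝ)) (hD : D.Nonempty)
    (hq0 : ∀ q ∈ D, ∀ x, 0 ≤ q x) (hq1 : ∀ q ∈ D, ∑' x, q x = 1) :
    ∑' x, p x * L ((1 / D.card : ℝ) * ∑ q ∈ D,
        (if q x * ε₁ ≤ 3 * ((1 / D.card : ℝ) * ∑ r ∈ D, r x) * M then q x else 0))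
      ≤ D.sup' hD (fun q => ∑' x, p x * L (q x)) + ε₁ / 3 :=
  stmt6_general M ε₁ hε L hconv hL p hp0 hp1 D hD hq0 hq1
end

section
/- Let p be a probability distribution over a countable set X and q₁, ..., q_R distributions such that for each i, Loss(q_i) ≤ OPT + ε/2 where Loss(q) = E_{x∼p}[L(q(x))] for a loss L bounded in [0,M]. Suppose a uniformly random index i ∈ {1,...,R} satisfies Pr_{x∼p}[x ∈ supp(q^i) ∧ ∀ j > i, x ∉ supp(q^j)] ≤ 16/R with probability at least 15/16, and define q̂ from q^i by zeroing its mass outside A^i = {x : ∃ j > i, x ∈ supp(q^j)} (redirecting to a fixed point with p-mass 0). If R ≥ 32M/ε, then with probability at least 15/16 over the choice of i, Loss(q̂) ≤ OPT + ε. -/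
/-!
Off the set `A` where a later distribution is positive, the truncated distribution is `0`; there
the loss rises from `L (q x) ≥ 0` to at most `L 0 ≤ M`, and only where `q x > 0`. So truncation
costs at most `M` times the `p`-mass of the points of `supp q` outside `A`. For every index whose
mass is at most `16 / R` this is at most `16 M / R ≤ ε / 2`, and such indices form a `15/16`
fraction by hypothesis.
-/

open scoped Classical BigOperators

open Set

theorem summable_of_tsum_ne_zero {X : Type*} {f : X → ℝ} (h : ∑' x, f x ≠ 0) : Summable f := by
  by_contra hf
  exact h (tsum_eq_zero_of_not_summable hf)

theorem mem_Icc_of_tsum_eq_one {X : Type*} {f : X → ℝ} (hf0 : ∀ x, 0 ≤ f x)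
    (hf1 : ∑' x, f x = 1) (x : X) : f x ∈ Icc 0 1 :=
  ⟨hf0 x, hf1 ▸ (summable_of_tsum_ne_zero (by simp [hf1])).le_tsum x fun y _ => hf0 y⟩

section Loss

variable {X : Type*} {p : X → ℝ} {L : ℝ → ℝ} {M : ℝ}

theorem summable_mul_loss (hp0 : ∀ x, 0 ≤ p x) (hp : Summable p)
    (hL : ∀ t ∈ Icc (0:ℝ) 1, L t ∈ Icc 0 M) {g : X → ℝ} (hg : ∀ x, g x ∈ Icc 0 1) :
    Summable fun x => p x * L (g x) :=
  Summable.of_nonneg_of_le (fun x => mul_nonneg (hp0 x) (hL _ (hg x)).1)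
    (fun x => by simpa [mul_comm] using mul_le_mul_of_nonneg_left (hL _ (hg x)).2 (hp0 x))
    (hp.mul_left M)

theorem loss_ite_le_loss_add (hL : ∀ t ∈ Icc (0:ℝ) 1, L t ∈ Icc 0 M) {t : ℝ}
    (ht : t ∈ Icc 0 1) (P Q : Prop) [Decidable P] [Decidable Q] (hPQ : 0 < t → ¬ P → Q) :
    L (if P then t else 0) ≤ L t + if Q then M else 0 := by
  have hL0 := hL 0 ⟨le_rfl, zero_le_one⟩
  have hQ : 0 ≤ if Q then M else 0 := by split_ifs <;> linarith [hL0.1, hL0.2]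
  by_cases hP : P
  · simp only [if_pos hP]
    linarith
  rcases ht.1.lt_or_eq with hpos | hzero
  · simp only [if_neg hP, if_pos (hPQ hpos hP)]
    linarith [hL0.2, (hL t ht).1]
  · simp only [if_neg hP, ← hzero]
    linarith

theorem tsum_mul_loss_ite_le (hp0 : ∀ x, 0 ≤ p x) (hp : Summable p)
    (hL : ∀ t ∈ Icc (0:ℝ) 1, L t ∈ Icc 0 M) {f : X → ℝ} (hf : ∀ x, f x ∈ Icc 0 1)
    (P Q : X → Prop) [DecidablePred P] [DecidablePred Q] (hPQ : ∀ x, 0 < f x → ¬ P x → Q x) :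
    ∑' x, p x * L (if P x then f x else 0)
      ≤ ∑' x, p x * L (f x) + M * ∑' x, if Q x then p x else 0 := by
  have hfP : ∀ x, (if P x then f x else 0) ∈ Icc 0 1 := fun x => by
    split_ifs
    exacts [hf x, ⟨le_rfl, zero_le_one⟩]
  have hQ : Summable fun x => if Q x then p x else 0 :=
    Summable.of_nonneg_of_le (fun x => by split_ifs <;> simp [hp0 x])
      (fun x => by split_ifs <;> simp [hp0 x]) hp
  have hpointwise : ∀ x, p x * L (if P x then f x else 0)
      ≤ p x * L (f x) + M * if Q x then p x else 0 := fun x => by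
    have := mul_le_mul_of_nonneg_left
      (loss_ite_le_loss_add hL (hf x) (P x) (Q x) (hPQ x)) (hp0 x)
    split_ifs at this ⊢ <;> linarith
  calc ∑' x, p x * L (if P x then f x else 0)
      ≤ ∑' x, (p x * L (f x) + M * if Q x then p x else 0) :=
        (summable_mul_loss hp0 hp hL hfP).tsum_le_tsum hpointwise
          ((summable_mul_loss hp0 hp hL hf).add (hQ.mul_left M))
    _ = _ := by rw [(summable_mul_loss hp0 hp hL hf).tsum_add (hQ.mul_left M), tsum_mul_left]

end Loss

theorem mul_div_le_half_of_div_le {M ε : ℝ} {R : ℕ} (hε : 0 < ε)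
    (hR : 32 * M / ε ≤ R) : M * (16 / R) ≤ ε / 2 := by
  rcases (Nat.cast_nonneg R : (0:ℝ) ≤ R).lt_or_eq with hRpos | hRzero
  · rw [div_le_iff₀ hε] at hR
    rw [mul_div_assoc', div_le_iff₀ hRpos]
    linarith
  · rw [← hRzero]
    simp only [div_zero, mul_zero]
    positivity

theorem stmt16_general {X : Type*} (M ε OPT : ℝ) (hε : 0 < ε)
    (L : ℝ → ℝ)
    (hL : ∀ t ∈ Set.Icc (0:ℝ) 1, L t ∈ Set.Icc 0 M)
    (p : X → ℝ) (hp0 : ∀ x, 0 ≤ p x) (hp1 : ∑' x, p x = 1)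
    (R : ℕ) (hR : 32 * M / ε ≤ R)
    (q : Fin R → X → ℝ) (hq0 : ∀ i x, 0 ≤ q i x) (hq1 : ∀ i, ∑' x, q i x = 1)
    (hloss : ∀ i, ∑' x, p x * L (q i x) ≤ OPT + ε / 2)
    (hidx : (15:ℝ)/16 ≤ ((Finset.univ.filter (fun i : Fin R =>
        (∑' x, (if 0 < q i x ∧ ∀ j : Fin R, i < j → ¬ 0 < q j x then p x else 0))
          ≤ 16 / R)).card : ℝ) / R) :
    (15:ℝ)/16 ≤ ((Finset.univ.filter (fun i : Fin R =>
        (∑' x, p x * L (if ∃ j : Fin R, i < j ∧ 0 < q j x then q i x else 0))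
          ≤ OPT + ε)).card : ℝ) / R := by
  have hp : Summable p := summable_of_tsum_ne_zero (by simp [hp1])
  have hM0 : 0 ≤ M := (hL 0 ⟨le_rfl, zero_le_one⟩).1.trans (hL 0 ⟨le_rfl, zero_le_one⟩).2
  have good : ∀ i : Fin R,
      (∑' x, (if 0 < q i x ∧ ∀ j : Fin R, i < j → ¬ 0 < q j x then p x else 0)) ≤ 16 / R →
      (∑' x, p x * L (if ∃ j : Fin R, i < j ∧ 0 < q j x then q i x else 0)) ≤ OPT + ε := by
    intro i hi
    have htrunc := tsum_mul_loss_ite_le hp0 hp hL (mem_Icc_of_tsum_eq_one (hq0 i) (hq1 i))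
      (fun x => ∃ j : Fin R, i < j ∧ 0 < q j x)
      (fun x => 0 < q i x ∧ ∀ j : Fin R, i < j → ¬ 0 < q j x)
      (fun x hpos hout => ⟨hpos, fun j hij hj => hout ⟨j, hij, hj⟩⟩)
    linarith [hloss i, mul_le_mul_of_nonneg_left hi hM0, mul_div_le_half_of_div_le hε hR]
  refine hidx.trans (div_le_div_of_nonneg_right ?_ (Nat.cast_nonneg R))
  exact_mod_cast Finset.card_le_card (Finset.monotone_filter_right _ fun i _ => good i)

theorem stmt16 {X : Type*} [Countable X] (M ε OPT : ℝ) (hM : 0 < M) (hε : 0 < ε)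
    (L : ℝ → ℝ) (hanti : AntitoneOn L (Set.Icc 0 1))
    (hL : ∀ t ∈ Set.Icc (0:ℝ) 1, L t ∈ Set.Icc 0 M)
    (p : X → ℝ) (hp0 : ∀ x, 0 ≤ p x) (hp1 : ∑' x, p x = 1)
    (R : ℕ) (hR : 32 * M / ε ≤ R)
    (q : Fin R → X → ℝ) (hq0 : ∀ i x, 0 ≤ q i x) (hq1 : ∀ i, ∑' x, q i x = 1)
    (hloss : ∀ i, ∑' x, p x * L (q i x) ≤ OPT + ε / 2)
    (hidx : (15:ℝ)/16 ≤ ((Finset.univ.filter (fun i : Fin R =>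
        (∑' x, (if 0 < q i x ∧ ∀ j : Fin R, i < j → ¬ 0 < q j x then p x else 0))
          ≤ 16 / R)).card : ℝ) / R) :
    (15:ℝ)/16 ≤ ((Finset.univ.filter (fun i : Fin R =>
        (∑' x, p x * L (if ∃ j : Fin R, i < j ∧ 0 < q j x then q i x else 0))
          ≤ OPT + ε)).card : ℝ) / R :=
  stmt16_general M ε OPT hε L hL p hp0 hp1 R hR q hq0 hq1 hloss hidx
end
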